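/- Let I_1, …, I_m ⊆ ℕ_0 be nonempty intervals with I_j ≪ I_{j+1} for each j (meaning min I_{j+1} − max I_j ≥ 2), and let x_j ∈ R(P_{I_j}) for each j. Then 2‖Σ_{j=1}^m x_j‖_J² ≥ Σ_{j=1}^m ‖x_j‖_J². -/

import Mathlib

open Filter Topology

/-- Composition `φ_n^m = φ_{m-1} ∘ ⋯ ∘ φ_n : X n →L X m` (junk value for `m < n`). -/
noncomputable def phiTo {X : ℕ → Type*} [∀ n, NormedAddCommGroup (X n)]
    [∀ n, NormedSpace ℝ (X n)] (φ : ∀ n, X n →L[ℝ] X (n + 1)) (n : ℕ) :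
    (m : ℕ) → X n →L[ℝ] X m
  | 0 => 0
  | m + 1 =>
    if h : m + 1 = n then by rw [h]; exact ContinuousLinearMap.id ℝ (X n)
    else (φ m).comp (phiTo φ n m)

open Classical in
/-- `σ(x,S)²`: the sum over consecutive pairs `p < q` of `S` of `‖φ_p^q(x_p) - x_q‖²`. -/
noncomputable def sigma2 {X : ℕ → Type*} [∀ n, NormedAddCommGroup (X n)]
    [∀ n, NormedSpace ℝ (X n)] (φ : ∀ n, X n →L[ℝ] X (n + 1))
    (x : ∀ n, X n) (S : Finset ℕ) : ℝ :=
  ∑ p ∈ S, ∑ q ∈ S,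
    if p < q ∧ ∀ r ∈ S, ¬(p < r ∧ r < q) then ‖phiTo φ p q (x p) - x q‖ ^ 2 else 0

noncomputable def sigmaJ {X : ℕ → Type*} [∀ n, NormedAddCommGroup (X n)]
    [∀ n, NormedSpace ℝ (X n)] (φ : ∀ n, X n →L[ℝ] X (n + 1))
    (x : ∀ n, X n) (S : Finset ℕ) : ℝ :=
  Real.sqrt (sigma2 φ x S)

/-- `ρ(x,S)² = σ(x,S)² + ‖x_{max S}‖²`. -/
noncomputable def rho2 {X : ℕ → Type*} [∀ n, NormedAddCommGroup (X n)]
    [∀ n, NormedSpace ℝ (X n)] (φ : ∀ n, X n →L[ℝ] X (n + 1))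
    (x : ∀ n, X n) (S : Finset ℕ) (hS : S.Nonempty) : ℝ :=
  sigma2 φ x S + ‖x (S.max' hS)‖ ^ 2

noncomputable def rhoJ {X : ℕ → Type*} [∀ n, NormedAddCommGroup (X n)]
    [∀ n, NormedSpace ℝ (X n)] (φ : ∀ n, X n →L[ℝ] X (n + 1))
    (x : ∀ n, X n) (S : Finset ℕ) (hS : S.Nonempty) : ℝ :=
  Real.sqrt (rho2 φ x S hS)

/-- The set of values `ρ(x,S)` over finite nonempty `S ⊆ ℕ`. -/
def rhoSet {X : ℕ → Type*} [∀ n, NormedAddCommGroup (X n)]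
    [∀ n, NormedSpace ℝ (X n)] (φ : ∀ n, X n →L[ℝ] X (n + 1))
    (x : ∀ n, X n) : Set ℝ :=
  {r : ℝ | ∃ (S : Finset ℕ) (hS : S.Nonempty), r = rhoJ φ x S hS}

/-- Membership in `Ĵ(Φ)`: `sup_S ρ(x,S) < ∞`. -/
def memJhat {X : ℕ → Type*} [∀ n, NormedAddCommGroup (X n)]
    [∀ n, NormedSpace ℝ (X n)] (φ : ∀ n, X n →L[ℝ] X (n + 1))
    (x : ∀ n, X n) : Prop :=
  BddAbove (rhoSet φ x)

/-- The norm `‖x‖_J = (1/√2) sup_S ρ(x,S)`. -/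
noncomputable def normJ {X : ℕ → Type*} [∀ n, NormedAddCommGroup (X n)]
    [∀ n, NormedSpace ℝ (X n)] (φ : ∀ n, X n →L[ℝ] X (n + 1))
    (x : ∀ n, X n) : ℝ :=
  (Real.sqrt 2)⁻¹ * sSup (rhoSet φ x)

/-- Membership in `J(Φ)`: member of `Ĵ(Φ)` with `‖x_n‖ → 0`. -/
def memJ {X : ℕ → Type*} [∀ n, NormedAddCommGroup (X n)]
    [∀ n, NormedSpace ℝ (X n)] (φ : ∀ n, X n →L[ℝ] X (n + 1))
    (x : ∀ n, X n) : Prop :=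
  memJhat φ x ∧ Tendsto (fun n => ‖x n‖) atTop (𝓝 0)

open Classical in
/-- The coordinate restriction `P_I`. -/
noncomputable def restrictSeq {X : ℕ → Type*} [∀ n, NormedAddCommGroup (X n)]
    (I : Set ℕ) (x : ∀ n, X n) : ∀ n, X n :=
  fun n => if n ∈ I then x n else 0

/-- The stepping map `Q_α`. -/
noncomputable def stepSeq {X : ℕ → Type*} [∀ n, NormedAddCommGroup (X n)]
    [∀ n, NormedSpace ℝ (X n)] (φ : ∀ n, X n →L[ℝ] X (n + 1))
    (α : ℕ → ℕ) (x : ∀ n, X n) : ∀ n, X n :=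
  fun n => phiTo φ (α n) n (x (α n))

/-!
For `x` supported in an interval `I` and any `S`, put `T = S ∩ I`. The coordinates of `S` below
and above `I` vanish, so they contribute at most `‖x_{min T}‖²` and `‖x_{max T}‖²` (the maps
`φ` are contractions), whence `ρ(x,S)² ≤ rho2Min x T + rho2Min x {max T}`, where
`rho2Min x T = σ(x,T)² + ‖x_{min T}‖²`. Thus `‖x‖_J² ≤ sup_{T ⊆ I} rho2Min x T`.

Conversely, `rho2Min x_j T_j = σ(y, {b_j} ∪ T_j)²` for `y = Σ x_j`, where `b_j = min I_j - 1` is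
a zero of `y` (by the gaps between the intervals and `X_0 = 0`), and `σ²` is superadditive along
ordered unions, so `Σ rho2Min x_j T_j ≤ σ(y, ⋃ ({b_j} ∪ T_j))² ≤ 2‖y‖_J²`; here `y ∈ Ĵ(Φ)`
because each `ρ(·,S)` is a Euclidean norm of a vector of norms, hence subadditive.
-/

open Finset

lemma sqrt_sum_add_sq_le {ι : Type*} (s : Finset ι) {f g : ι → ℝ} (hf : ∀ i ∈ s, 0 ≤ f i)
    (hg : ∀ i ∈ s, 0 ≤ g i) :
    √(∑ i ∈ s, (f i + g i) ^ 2) ≤ √(∑ i ∈ s, f i ^ 2) + √(∑ i ∈ s, g i ^ 2) := by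
  simpa only [Real.sqrt_eq_rpow, Real.rpow_two] using Real.Lp_add_le_of_nonneg s one_le_two hf hg

lemma sum_le_of_forall_lt {ι : Type*} [Fintype ι] (M : ι → ℝ) {C : ℝ}
    (h : ∀ c : ι → ℝ, (∀ i, c i < M i) → ∑ i, c i ≤ C) : ∑ i, M i ≤ C := by
  have hlim : Filter.Tendsto (fun ε : ℝ => ∑ i, (M i - ε)) (𝓝[>] 0) (𝓝 (∑ i, M i)) :=
    ((continuous_finsetSum _ fun i _ => continuous_const.sub continuous_id).tendsto' 0 _
      (by simp)).mono_left nhdsWithin_le_nhds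
  exact le_of_tendsto hlim (eventually_nhdsWithin_of_forall fun ε hε =>
    h _ fun i => sub_lt_self _ hε)

lemma Set.OrdConnected.filter_lt_union_union_filter_gt {I : Set ℕ} (hI : I.OrdConnected)
    {S T : Finset ℕ} (hT : T.Nonempty) (hTS : T ⊆ S) (hTI : ↑T ⊆ I)
    (hST : ∀ s ∈ S, s ∈ I → s ∈ T) :
    (S.filter (· < T.min' hT) ∪ T) ∪ S.filter (T.max' hT < ·) = S := by
  ext s
  simp only [Finset.mem_union, Finset.mem_filter]
  constructor
  · rintro ((⟨hs, -⟩ | hs) | ⟨hs, -⟩)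
    exacts [hs, hTS hs, hs]
  · intro hs
    by_cases h₁ : s < T.min' hT
    · exact .inl (.inl ⟨hs, h₁⟩)
    by_cases h₂ : T.max' hT < s
    · exact .inr ⟨hs, h₂⟩
    exact .inl (.inr (hST s hs
      (hI.out (hTI (min'_mem _ _)) (hTI (max'_mem _ _)) ⟨not_lt.1 h₁, not_lt.1 h₂⟩)))

-- `I j ≪ I k` whenever `j < k`.
def GapSeparated {ι : Type*} [LT ι] (I : ι → Set ℕ) : Prop :=
  ∀ ⦃j k⦄, j < k → ∀ a ∈ I j, ∀ c ∈ I k, a + 2 ≤ c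

lemma gapSeparated_of_succ {m : ℕ} {I : Fin m → Set ℕ} (hne : ∀ j, (I j).Nonempty)
    (hskip : ∀ (j : Fin m) (h : (j : ℕ) + 1 < m),
      ∀ a ∈ I j, ∀ b ∈ I ⟨(j : ℕ) + 1, h⟩, a + 2 ≤ b) :
    GapSeparated I := by
  rintro ⟨j, hj⟩ ⟨k, hk⟩ hjk a ha
  induction k with
  | zero => exact absurd hjk (Nat.not_lt_zero j)
  | succ k ih =>
    intro c hc
    rcases (Nat.lt_succ_iff.1 hjk).eq_or_lt with rfl | hjk'
    · exact hskip ⟨j, hj⟩ hk a ha c hc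
    · obtain ⟨e, he⟩ := hne ⟨k, by omega⟩
      have := ih (by omega) hjk' e he
      have := hskip ⟨k, by omega⟩ hk e he c hc
      omega

namespace GapSeparated
variable {ι : Type*} [LinearOrder ι] {I : ι → Set ℕ}

lemma notMem_of_near (hsep : GapSeparated I) {j k : ι} (hjk : j ≠ k) {n : ℕ}
    (hn : n ∈ I j ∨ n + 1 ∈ I j) : n ∉ I k := by
  intro hk
  rcases hjk.lt_or_gt with h | h
  · rcases hn with hn | hn <;> linarith [hsep h _ hn _ hk]
  · rcases hn with hn | hn <;> linarith [hsep h _ hk _ hn]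

lemma lt_of_near (hsep : GapSeparated I) {j k : ι} (hjk : j < k) {e f : ℕ}
    (he : e ∈ I j ∨ e + 1 ∈ I j) (hf : f ∈ I k ∨ f + 1 ∈ I k) : e < f := by
  rcases he with he | he <;> rcases hf with hf | hf <;> linarith [hsep hjk _ he _ hf]

lemma sum_apply_eq_of_near [Fintype ι] {X : ℕ → Type*} [∀ n, AddCommMonoid (X n)]
    (hsep : GapSeparated I) {x : ι → ∀ n, X n} (hsupp : ∀ j n, n ∉ I j → x j n = 0) {j : ι}
    {n : ℕ} (hn : n ∈ I j ∨ n + 1 ∈ I j) : (∑ k, x k) n = x j n := by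
  rw [Finset.sum_apply, sum_eq_single j
    (fun k _ hkj => hsupp k n (hsep.notMem_of_near hkj.symm hn)) (absurd (mem_univ j))]

end GapSeparated

section
variable {X : ℕ → Type*} [∀ n, NormedAddCommGroup (X n)] [∀ n, NormedSpace ℝ (X n)]
  (φ : ∀ n, X n →L[ℝ] X (n + 1))

noncomputable def rho2Min (x : ∀ n, X n) (T : Finset ℕ) (hT : T.Nonempty) : ℝ :=
  sigma2 φ x T + ‖x (T.min' hT)‖ ^ 2

noncomputable def rhoTerm (x : ∀ n, X n) (S : Finset ℕ) (hS : S.Nonempty) : Option (ℕ × ℕ) → ℝ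
  | none => ‖x (S.max' hS)‖
  | some (p, q) =>
    if p < q ∧ ∀ r ∈ S, ¬(p < r ∧ r < q) then ‖phiTo φ p q (x p) - x q‖ else 0

variable {φ}

lemma norm_phiTo_apply_le (hφ : ∀ n, ‖φ n‖ ≤ 1) (n m : ℕ) (v : X n) :
    ‖phiTo φ n m v‖ ≤ ‖v‖ := by
  induction m with
  | zero => simp [phiTo]
  | succ k ih =>
    rw [phiTo]
    split_ifs with h
    · subst h; simp
    · calc ‖φ k (phiTo φ n k v)‖ ≤ ‖φ k‖ * ‖phiTo φ n k v‖ := (φ k).le_opNorm _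
        _ ≤ 1 * ‖v‖ := mul_le_mul (hφ k) ih (norm_nonneg _) zero_le_one
        _ = ‖v‖ := one_mul _

lemma sigma2_nonneg (x : ∀ n, X n) (S : Finset ℕ) : 0 ≤ sigma2 φ x S :=
  sum_nonneg fun _ _ => sum_nonneg fun _ _ => by split_ifs <;> positivity

lemma sigma2_congr {x y : ∀ n, X n} {S : Finset ℕ} (h : ∀ n ∈ S, x n = y n) :
    sigma2 φ x S = sigma2 φ y S :=
  sum_congr rfl fun p hp => sum_congr rfl fun q hq => by rw [h p hp, h q hq]

lemma sigma2_eq_zero {x : ∀ n, X n} {S : Finset ℕ} (h : ∀ n ∈ S, x n = 0) :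
    sigma2 φ x S = 0 :=
  (sigma2_congr (y := 0) h).trans (by simp [sigma2])

@[simp]
lemma sigma2_empty (x : ∀ n, X n) : sigma2 φ x ∅ = 0 := by simp [sigma2]

@[simp]
lemma sigma2_singleton (x : ∀ n, X n) (a : ℕ) : sigma2 φ x {a} = 0 := by simp [sigma2]

lemma sigma2_union {S₁ S₂ : Finset ℕ} (hlt : ∀ a ∈ S₁, ∀ b ∈ S₂, a < b) (x : ∀ n, X n)
    (h₁ : S₁.Nonempty) (h₂ : S₂.Nonempty) :
    sigma2 φ x (S₁ ∪ S₂) = sigma2 φ x S₁ + sigma2 φ x S₂ +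
      ‖phiTo φ (S₁.max' h₁) (S₂.min' h₂) (x (S₁.max' h₁)) - x (S₂.min' h₂)‖ ^ 2 := by
  have hdisj : Disjoint S₁ S₂ := disjoint_left.2 fun a ha ha' => (hlt a ha a ha').false
  simp only [sigma2, sum_union hdisj, sum_add_distrib]
  have hcross : ∀ p ∈ S₁, ∀ q ∈ S₂, (p < q ∧ ∀ r ∈ S₁ ∪ S₂, ¬(p < r ∧ r < q)) ↔
      p = S₁.max' h₁ ∧ q = S₂.min' h₂ := by
    intro p hp q hq
    constructor
    · rintro ⟨-, hno⟩
      refine ⟨le_antisymm (le_max' _ _ hp) ?_, le_antisymm ?_ (min'_le _ _ hq)⟩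
      · by_contra! h
        exact hno _ (mem_union_left _ (max'_mem _ _)) ⟨h, hlt _ (max'_mem _ _) q hq⟩
      · by_contra! h
        exact hno _ (mem_union_right _ (min'_mem _ _)) ⟨hlt p hp _ (min'_mem _ _), h⟩
    · rintro ⟨rfl, rfl⟩
      refine ⟨hlt _ hp _ hq, fun r hr h => ?_⟩
      rcases mem_union.1 hr with hr | hr
      · exact (le_max' _ r hr).not_gt h.1
      · exact (min'_le _ r hr).not_gt h.2
  have h₁₁ : ∀ p ∈ S₁, ∀ q ∈ S₁,
      (∀ r ∈ S₁ ∪ S₂, ¬(p < r ∧ r < q)) ↔ ∀ r ∈ S₁, ¬(p < r ∧ r < q) := fun p _ q hq => by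
    rw [forall_mem_union, and_iff_left fun r hr h => (hlt q hq r hr).asymm h.2]
  have h₂₂ : ∀ p ∈ S₂, ∀ q ∈ S₂,
      (∀ r ∈ S₁ ∪ S₂, ¬(p < r ∧ r < q)) ↔ ∀ r ∈ S₂, ¬(p < r ∧ r < q) := fun p hp q _ => by
    rw [forall_mem_union, and_iff_right fun r hr h => (hlt r hr p hp).asymm h.1]
  rw [sum_congr rfl fun p hp => sum_congr rfl fun q hq =>
      if_congr (and_congr_right' (h₁₁ p hp q hq)) rfl rfl,
    sum_congr rfl fun p hp => sum_congr rfl fun q hq => if_congr (hcross p hp q hq) rfl rfl,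
    sum_congr rfl fun p hp => sum_congr rfl fun q hq =>
      if_congr (and_congr_right' (h₂₂ p hp q hq)) rfl rfl,
    sum_eq_zero fun p hp => sum_eq_zero fun q hq => if_neg fun h => (hlt q hq p hp).asymm h.1]
  simp [ite_and, max'_mem, min'_mem]
  ring

lemma sigma2_add_sigma2_le_union {S₁ S₂ : Finset ℕ} (hlt : ∀ a ∈ S₁, ∀ b ∈ S₂, a < b)
    (x : ∀ n, X n) : sigma2 φ x S₁ + sigma2 φ x S₂ ≤ sigma2 φ x (S₁ ∪ S₂) := by
  rcases S₁.eq_empty_or_nonempty with rfl | h₁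
  · simp
  rcases S₂.eq_empty_or_nonempty with rfl | h₂
  · simp
  rw [sigma2_union hlt x h₁ h₂]
  exact le_add_of_nonneg_right (sq_nonneg _)

lemma sum_sigma2_le_sigma2_biUnion {ι : Type*} [LinearOrder ι] (x : ∀ n, X n) (s : Finset ι)
    {B : ι → Finset ℕ} (hB : ∀ j k, j < k → ∀ a ∈ B j, ∀ b ∈ B k, a < b) :
    ∑ j ∈ s, sigma2 φ x (B j) ≤ sigma2 φ x (s.biUnion B) := by
  induction s using Finset.induction_on_max with
  | empty => simp
  | insert k s hk ih =>
    have hks : k ∉ s := fun h => (hk k h).false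
    rw [sum_insert hks, biUnion_insert, union_comm, add_comm]
    refine (add_le_add_left ih _).trans (sigma2_add_sigma2_le_union ?_ x)
    intro a ha b hb
    obtain ⟨j, hj, ha⟩ := mem_biUnion.1 ha
    exact hB j k (hk j hj) a ha b hb

lemma rho2_nonneg (x : ∀ n, X n) (S : Finset ℕ) (hS : S.Nonempty) : 0 ≤ rho2 φ x S hS :=
  add_nonneg (sigma2_nonneg x S) (sq_nonneg _)

lemma normJ_sq (x : ∀ n, X n) : normJ φ x ^ 2 = sSup (rhoSet φ x) ^ 2 / 2 := by
  rw [normJ, mul_pow, inv_pow, Real.sq_sqrt zero_le_two]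
  ring

lemma sigma2_le_two_mul_normJ_sq {x : ∀ n, X n} (hx : memJhat φ x) (S : Finset ℕ) :
    sigma2 φ x S ≤ 2 * normJ φ x ^ 2 := by
  rcases S.eq_empty_or_nonempty with rfl | hS
  · simp only [sigma2_empty]
    positivity
  calc sigma2 φ x S ≤ rho2 φ x S hS := le_add_of_nonneg_right (sq_nonneg _)
    _ = rhoJ φ x S hS ^ 2 := (Real.sq_sqrt (rho2_nonneg x S hS)).symm
    _ ≤ sSup (rhoSet φ x) ^ 2 := pow_le_pow_left₀ (Real.sqrt_nonneg _) (le_csSup hx ⟨S, hS, rfl⟩) 2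
    _ = 2 * normJ φ x ^ 2 := by rw [normJ_sq]; ring

lemma exists_lt_rho2_of_lt_normJ_sq {x : ∀ n, X n} {c : ℝ} (hc : c < normJ φ x ^ 2) :
    ∃ S hS, 2 * c < rho2 φ x S hS := by
  rcases lt_or_ge c 0 with hc0 | hc0
  · exact ⟨{0}, singleton_nonempty 0, (by linarith : 2 * c < 0).trans_le (rho2_nonneg _ _ _)⟩
  have hsSup : 0 ≤ sSup (rhoSet φ x) :=
    Real.sSup_nonneg fun r ⟨S, hS, hr⟩ => hr ▸ Real.sqrt_nonneg _
  have hlt : √(2 * c) < sSup (rhoSet φ x) := by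
    rw [normJ_sq] at hc
    rw [← Real.sqrt_sq hsSup]
    exact Real.sqrt_lt_sqrt (by positivity) (by linarith)
  obtain ⟨_, ⟨S, hS, rfl⟩, hS2⟩ :=
    exists_lt_of_lt_csSup (⟨_, {0}, singleton_nonempty 0, rfl⟩ : (rhoSet φ x).Nonempty) hlt
  exact ⟨S, hS, (Real.sqrt_lt_sqrt_iff (by positivity)).1 hS2⟩

lemma rhoTerm_nonneg (x : ∀ n, X n) {S : Finset ℕ} (hS : S.Nonempty) (o : Option (ℕ × ℕ)) :
    0 ≤ rhoTerm φ x S hS o := by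
  rcases o with _ | ⟨p, q⟩
  · exact norm_nonneg _
  · simp only [rhoTerm]
    split_ifs <;> positivity

lemma rho2_eq_sum_rhoTerm_sq (x : ∀ n, X n) {S : Finset ℕ} (hS : S.Nonempty) :
    rho2 φ x S hS = ∑ o ∈ (S ×ˢ S).insertNone, rhoTerm φ x S hS o ^ 2 := by
  rw [sum_insertNone, rho2, sigma2, sum_product, add_comm]
  simp only [rhoTerm, ite_pow, zero_pow two_ne_zero]

lemma rhoTerm_add_le (x y : ∀ n, X n) {S : Finset ℕ} (hS : S.Nonempty) (o : Option (ℕ × ℕ)) :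
    rhoTerm φ (x + y) S hS o ≤ rhoTerm φ x S hS o + rhoTerm φ y S hS o := by
  rcases o with _ | ⟨p, q⟩
  · exact norm_add_le _ _
  · simp only [rhoTerm]
    split_ifs
    · rw [Pi.add_apply, Pi.add_apply, map_add, add_sub_add_comm]
      exact norm_add_le _ _
    · simp

lemma rhoJ_add_le (x y : ∀ n, X n) {S : Finset ℕ} (hS : S.Nonempty) :
    rhoJ φ (x + y) S hS ≤ rhoJ φ x S hS + rhoJ φ y S hS := by
  simp only [rhoJ, rho2_eq_sum_rhoTerm_sq]
  refine (Real.sqrt_le_sqrt (sum_le_sum fun o _ => ?_)).trans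
    (sqrt_sum_add_sq_le _ (fun o _ => rhoTerm_nonneg x hS o) fun o _ => rhoTerm_nonneg y hS o)
  exact pow_le_pow_left₀ (rhoTerm_nonneg _ hS o) (rhoTerm_add_le x y hS o) 2

lemma rhoJ_zero {S : Finset ℕ} (hS : S.Nonempty) : rhoJ φ 0 S hS = 0 := by
  simp [rhoJ, rho2, sigma2_eq_zero]

lemma memJhat_sum {ι : Type*} (s : Finset ι) {x : ι → ∀ n, X n}
    (hx : ∀ j ∈ s, memJhat φ (x j)) : memJhat φ (∑ j ∈ s, x j) := by
  refine ⟨∑ j ∈ s, sSup (rhoSet φ (x j)), ?_⟩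
  rintro _ ⟨S, hS, rfl⟩
  exact (le_sum_of_subadditive (fun y => rhoJ φ y S hS) (rhoJ_zero hS).le
    (fun y z => rhoJ_add_le y z hS) s x).trans
    (sum_le_sum fun j hj => le_csSup (hx j hj) ⟨S, hS, rfl⟩)

lemma rho2Min_singleton (x : ∀ n, X n) (a : ℕ) :
    rho2Min φ x {a} (singleton_nonempty a) = ‖x a‖ ^ 2 := by
  rw [rho2Min, sigma2_singleton, min'_singleton, zero_add]

lemma sigma2_union_eq_rho2Min {S₁ S₂ : Finset ℕ} (hlt : ∀ a ∈ S₁, ∀ b ∈ S₂, a < b)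
    {x : ∀ n, X n} (hx : ∀ n ∈ S₁, x n = 0) (h₁ : S₁.Nonempty) (h₂ : S₂.Nonempty) :
    sigma2 φ x (S₁ ∪ S₂) = rho2Min φ x S₂ h₂ := by
  rw [sigma2_union hlt x h₁ h₂, sigma2_eq_zero hx, hx _ (max'_mem _ _), map_zero, zero_sub,
    norm_neg, zero_add, rho2Min]

lemma sigma2_insert_eq_rho2Min {x : ∀ n, X n} {b : ℕ} {T : Finset ℕ} (hT : T.Nonempty)
    (hb : x b = 0) (hbT : ∀ t ∈ T, b ≤ t) :
    sigma2 φ x (insert b T) = rho2Min φ x T hT := by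
  by_cases hbT' : b ∈ T
  · have hmin : T.min' hT = b := le_antisymm (min'_le _ _ hbT') (hbT _ (min'_mem _ _))
    rw [insert_eq_of_mem hbT', rho2Min, hmin, hb, norm_zero, zero_pow two_ne_zero, add_zero]
  · refine insert_eq b T ▸ sigma2_union_eq_rho2Min ?_ (by simpa) (singleton_nonempty b) hT
    intro a ha t ht
    rw [mem_singleton.1 ha]
    exact (hbT t ht).lt_of_ne fun h => hbT' (h ▸ ht)

lemma rho2_union_le {S₁ S₂ : Finset ℕ} (hlt : ∀ a ∈ S₁, ∀ b ∈ S₂, a < b)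
    (hφ : ∀ n, ‖φ n‖ ≤ 1) {x : ∀ n, X n} (hx : ∀ n ∈ S₂, x n = 0) (h₁ : S₁.Nonempty)
    (h : (S₁ ∪ S₂).Nonempty) : rho2 φ x (S₁ ∪ S₂) h ≤ rho2 φ x S₁ h₁ := by
  rcases S₂.eq_empty_or_nonempty with rfl | h₂
  · simp only [union_empty, le_refl]
  have hmax : (S₁ ∪ S₂).max' h ∈ S₂ := by
    refine (mem_union.1 (max'_mem _ h)).resolve_left fun hmax => ?_
    obtain ⟨b, hb⟩ := h₂
    exact (le_max' _ b (mem_union_right _ hb)).not_gt (hlt _ hmax b hb)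
  rw [rho2, rho2, sigma2_union hlt x h₁ h₂, sigma2_eq_zero hx, hx _ hmax, hx _ (min'_mem _ _),
    sub_zero, norm_zero, add_zero, zero_pow two_ne_zero, add_zero]
  gcongr
  exact norm_phiTo_apply_le hφ _ _ _

lemma rho2_le_rho2Min_add_sq (hφ : ∀ n, ‖φ n‖ ≤ 1) {I : Set ℕ} (hI : I.OrdConnected)
    {x : ∀ n, X n} (hx : ∀ n ∉ I, x n = 0) {S T : Finset ℕ} (hS : S.Nonempty) (hT : T.Nonempty)
    (hTS : T ⊆ S) (hTI : ↑T ⊆ I) (hST : ∀ s ∈ S, s ∈ I → s ∈ T) :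
    rho2 φ x S hS ≤ rho2Min φ x T hT + ‖x (T.max' hT)‖ ^ 2 := by
  set L := S.filter (· < T.min' hT)
  set H := S.filter (T.max' hT < ·)
  have hSeq : S = (L ∪ T) ∪ H := (hI.filter_lt_union_union_filter_gt hT hTS hTI hST).symm
  have hzero : ∀ s ∈ S, s < T.min' hT ∨ T.max' hT < s → x s = 0 := by
    refine fun s hs h => hx s fun hsI => ?_
    rcases h with h | h
    exacts [(min'_le _ _ (hST s hs hsI)).not_gt h, (le_max' _ _ (hST s hs hsI)).not_gt h]
  have hLT : sigma2 φ x (L ∪ T) ≤ rho2Min φ x T hT := by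
    rcases L.eq_empty_or_nonempty with hL | hL
    · rw [hL, empty_union, rho2Min]
      exact le_add_of_nonneg_right (sq_nonneg _)
    refine (sigma2_union_eq_rho2Min ?_ ?_ hL hT).le
    · exact fun a ha b hb => (mem_filter.1 ha).2.trans_le (min'_le _ _ hb)
    · exact fun n hn => hzero n (mem_filter.1 hn).1 (.inl (mem_filter.1 hn).2)
  have hLTne : (L ∪ T).Nonempty := hT.mono subset_union_right
  have hmax : (L ∪ T).max' hLTne = T.max' hT := by
    refine le_antisymm (max'_le _ _ _ fun a ha => ?_)
      (le_max' _ _ (mem_union_right _ (max'_mem _ _)))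
    rcases mem_union.1 ha with ha | ha
    exacts [((mem_filter.1 ha).2.trans_le (min'_le_max' ..)).le, le_max' _ _ ha]
  calc rho2 φ x S hS = rho2 φ x ((L ∪ T) ∪ H) (hSeq ▸ hS) := by congr
    _ ≤ rho2 φ x (L ∪ T) hLTne := by
      refine rho2_union_le (fun a ha b hb => ?_) hφ
        (fun n hn => hzero n (mem_filter.1 hn).1 (.inr (mem_filter.1 hn).2)) hLTne _
      refine lt_of_le_of_lt ?_ (mem_filter.1 hb).2
      rw [← hmax]
      exact le_max' _ _ ha
    _ ≤ rho2Min φ x T hT + ‖x (T.max' hT)‖ ^ 2 := by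
      rw [rho2, hmax]
      gcongr

lemma exists_lt_rho2Min_of_lt_normJ_sq (hφ : ∀ n, ‖φ n‖ ≤ 1) {I : Set ℕ} (hI : I.OrdConnected)
    (hne : I.Nonempty) {x : ∀ n, X n} (hx : ∀ n ∉ I, x n = 0) {c : ℝ}
    (hc : c < normJ φ x ^ 2) :
    ∃ T : Finset ℕ, ↑T ⊆ I ∧ ∃ hT : T.Nonempty, c < rho2Min φ x T hT := by
  classical
  obtain ⟨S, hS, hcS⟩ := exists_lt_rho2_of_lt_normJ_sq hc
  set T := S.filter (· ∈ I)
  have hTI : ↑T ⊆ I := fun n hn => (mem_filter.1 hn).2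
  rcases T.eq_empty_or_nonempty with hT | hT
  · have hxS : ∀ n ∈ S, x n = 0 := fun n hn => hx n fun hnI =>
      (eq_empty_iff_forall_notMem.1 hT) n (mem_filter.2 ⟨hn, hnI⟩)
    rw [rho2, sigma2_eq_zero hxS, hxS _ (max'_mem _ _), norm_zero] at hcS
    obtain ⟨a, ha⟩ := hne
    refine ⟨{a}, by simpa using ha, singleton_nonempty a, ?_⟩
    rw [rho2Min_singleton]
    nlinarith [sq_nonneg ‖x a‖]
  have hle := rho2_le_rho2Min_add_sq hφ hI hx hS hT (filter_subset _ _) hTI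
    fun s hs hsI => mem_filter.2 ⟨hs, hsI⟩
  by_cases hcT : c < rho2Min φ x T hT
  · exact ⟨T, hTI, hT, hcT⟩
  refine ⟨{T.max' hT}, by simpa using hTI (max'_mem _ _), singleton_nonempty _, ?_⟩
  rw [rho2Min_singleton]
  linarith

lemma exists_sum_rho2Min_le_sigma2 [Subsingleton (X 0)] {ι : Type*} [Fintype ι] [LinearOrder ι]
    {I : ι → Set ℕ} (hsep : GapSeparated I) {x : ι → ∀ n, X n}
    (hsupp : ∀ j n, n ∉ I j → x j n = 0) {T : ι → Finset ℕ} (hTI : ∀ j, ↑(T j) ⊆ I j)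
    (hT : ∀ j, (T j).Nonempty) :
    ∃ S, ∑ j, rho2Min φ (x j) (T j) (hT j) ≤ sigma2 φ (∑ j, x j) S := by
  -- truncated subtraction: `b j = 0` when `min I_j = 0`, still a zero as `X 0` is trivial
  set b : ι → ℕ := fun j => sInf (I j) - 1
  have hsInf : ∀ j, sInf (I j) ∈ I j := fun j =>
    Nat.sInf_mem ((hT j).to_set.mono (hTI j))
  have hb : ∀ j, (b j ∈ I j ∨ b j + 1 ∈ I j) ∧ x j (b j) = 0 := by
    intro j
    rcases Nat.eq_zero_or_pos (sInf (I j)) with h | h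
    · have hb0 : b j = 0 := by simp [b, h]
      exact ⟨.inl (hb0 ▸ h ▸ hsInf j), hb0 ▸ Subsingleton.elim _ _⟩
    · refine ⟨.inr (by simpa [b, Nat.sub_add_cancel h] using hsInf j), hsupp j _ fun hbI => ?_⟩
      exact (Nat.sInf_le hbI).not_gt (Nat.sub_lt h one_pos)
  have hnear : ∀ j, ∀ n ∈ insert (b j) (T j), n ∈ I j ∨ n + 1 ∈ I j := by
    intro j n hn
    rcases mem_insert.1 hn with rfl | hn
    exacts [(hb j).1, .inl (hTI j hn)]
  refine ⟨univ.biUnion fun j => insert (b j) (T j), ?_⟩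
  calc ∑ j, rho2Min φ (x j) (T j) (hT j) = ∑ j, sigma2 φ (x j) (insert (b j) (T j)) :=
        sum_congr rfl fun j _ => (sigma2_insert_eq_rho2Min (hT j) (hb j).2
          fun t ht => (Nat.sub_le _ _).trans (Nat.sInf_le (hTI j ht))).symm
    _ = ∑ j, sigma2 φ (∑ k, x k) (insert (b j) (T j)) :=
        sum_congr rfl fun j _ => sigma2_congr fun n hn =>
          (hsep.sum_apply_eq_of_near hsupp (hnear j n hn)).symm
    _ ≤ _ := sum_sigma2_le_sigma2_biUnion _ _ fun j k hjk a ha c hc =>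
        hsep.lt_of_near hjk (hnear j a ha) (hnear k c hc)

end

theorem stmt9_general {X : ℕ → Type*} [∀ n, NormedAddCommGroup (X n)] [∀ n, NormedSpace ℝ (X n)]
    [Subsingleton (X 0)]
    (φ : ∀ n, X n →L[ℝ] X (n + 1)) (hφ : ∀ n, ‖φ n‖ ≤ 1)
    (m : ℕ) (I : Fin m → Set ℕ) (hI : ∀ j, (I j).OrdConnected)
    (hne : ∀ j, (I j).Nonempty)
    (hskip : ∀ (j : Fin m) (h : (j : ℕ) + 1 < m),
      ∀ a ∈ I j, ∀ b ∈ I ⟨(j : ℕ) + 1, h⟩, a + 2 ≤ b)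
    (x : Fin m → ∀ n, X n) (hsupp : ∀ j n, n ∉ I j → x j n = 0)
    (hmem : ∀ j, memJhat φ (x j)) :
    2 * normJ φ (∑ j, x j) ^ 2 ≥ ∑ j, normJ φ (x j) ^ 2 := by
  refine sum_le_of_forall_lt _ fun c hc => ?_
  choose T hTI hT hcT using fun j =>
    exists_lt_rho2Min_of_lt_normJ_sq hφ (hI j) (hne j) (hsupp j) (hc j)
  obtain ⟨S, hS⟩ := exists_sum_rho2Min_le_sigma2 (gapSeparated_of_succ hne hskip) hsupp hTI hT
  calc ∑ j, c j ≤ ∑ j, rho2Min φ (x j) (T j) (hT j) := sum_le_sum fun j _ => (hcT j).le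
    _ ≤ sigma2 φ (∑ j, x j) S := hS
    _ ≤ 2 * normJ φ (∑ j, x j) ^ 2 :=
      sigma2_le_two_mul_normJ_sq (memJhat_sum _ fun j _ => hmem j) S

/-- lower 2-estimate. If `I_1 ≪ I_2 ≪ ⋯ ≪ I_m` are nonempty intervals
(consecutive ones separated by a gap of at least one integer) and `x_j` is supported
in `I_j`, then `2 ‖Σ x_j‖_J² ≥ Σ ‖x_j‖_J²`. -/
theorem stmt9 {X : ℕ → Type*} [∀ n, NormedAddCommGroup (X n)] [∀ n, NormedSpace ℝ (X n)]
    [∀ n, CompleteSpace (X n)] [Subsingleton (X 0)]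
    (φ : ∀ n, X n →L[ℝ] X (n + 1)) (hφ : ∀ n, ‖φ n‖ ≤ 1)
    (m : ℕ) (I : Fin m → Set ℕ) (hI : ∀ j, (I j).OrdConnected)
    (hne : ∀ j, (I j).Nonempty)
    (hskip : ∀ (j : Fin m) (h : (j : ℕ) + 1 < m),
      ∀ a ∈ I j, ∀ b ∈ I ⟨(j : ℕ) + 1, h⟩, a + 2 ≤ b)
    (x : Fin m → ∀ n, X n) (hsupp : ∀ j n, n ∉ I j → x j n = 0)
    (hmem : ∀ j, memJhat φ (x j)) :
    2 * normJ φ (∑ j, x j) ^ 2 ≥ ∑ j, normJ φ (x j) ^ 2 :=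
  stmt9_general φ hφ m I hI hne hskip x hsupp hmem
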